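/- Let ν > 0, ρ > 0 and let (ℓ_j)_{j ∈ ℕ} be a sequence of independent, identically distributed real random variables, each with the exponential distribution of rate ν, and set S_k := ℓ_1 + ⋯ + ℓ_k. Then almost surely there exists N₀ ∈ ℕ such that for all N ≥ N₀ one has #{ k ∈ ℕ : S_k ≤ N/(2ρ) and ℓ_k ≥ 3 } ≥ ν N / (8 e^{3ν} ρ). -/

import Mathlib

/-!
By the strong law of large numbers, almost surely `S_n / n → 1/ν` and the proportion of
`k ≤ n` with `ℓ_k ≥ 3` tends to `P(ℓ ≥ 3) = e^{-3ν}`. Since the spacings are nonnegative, all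
`k ≤ n ≈ ν x` then satisfy `S_k ≤ x`, so for large `x` at least `c x` indices satisfy
`S_k ≤ x ∧ ℓ_k ≥ 3`, for any `c < ν e^{-3ν}`. The theorem takes `x = N/(2ρ)` and
`c = ν e^{-3ν}/4`.
-/

open MeasureTheory ProbabilityTheory Filter Real Set Topology

section ExpNegMul

variable {ν : ℝ}

lemma integral_exp_neg_mul_Ioi (hν : 0 < ν) (c : ℝ) :
    ∫ x in Ioi c, exp (-(ν * x)) = exp (-(ν * c)) / ν := by
  simp_rw [← neg_mul]
  rw [integral_exp_mul_Ioi (neg_lt_zero.mpr hν), neg_div_neg_eq]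

lemma integrableOn_exp_neg_mul_Ioi (hν : 0 < ν) (c : ℝ) :
    IntegrableOn (fun x => exp (-(ν * x))) (Ioi c) := by
  simp_rw [← neg_mul]
  exact integrableOn_exp_mul_Ioi (neg_lt_zero.mpr hν) c

end ExpNegMul

namespace ProbabilityTheory

variable {ν : ℝ}

lemma expMeasure_Iio_zero : expMeasure ν (Iio 0) = 0 := by
  rw [expMeasure, gammaMeasure, withDensity_apply _ measurableSet_Iio]
  exact lintegral_exponentialPDF_of_nonpos le_rfl

lemma ae_nonneg_expMeasure : ∀ᵐ x ∂expMeasure ν, 0 ≤ x :=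
  measure_mono_null (fun x (hx : ¬ 0 ≤ x) => (not_le.mp hx : x ∈ Iio 0)) expMeasure_Iio_zero

lemma expMeasure_Ici (hν : 0 < ν) {t : ℝ} (ht : 0 ≤ t) :
    expMeasure ν (Ici t) = ENNReal.ofReal (exp (-(ν * t))) := by
  rw [expMeasure, gammaMeasure, withDensity_apply _ measurableSet_Ici,
    setLIntegral_congr Ioi_ae_eq_Ici.symm,
    setLIntegral_congr_fun measurableSet_Ioi (f := gammaPDF 1 ν)
      (g := fun x => ENNReal.ofReal (ν * exp (-(ν * x))))
      (fun x hx => exponentialPDF_of_nonneg (ht.trans hx.le)),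
    ← ofReal_integral_eq_lintegral_ofReal ((integrableOn_exp_neg_mul_Ioi hν t).const_mul ν)
      (.of_forall fun x => by positivity),
    integral_const_mul, integral_exp_neg_mul_Ioi hν, mul_div_cancel₀ _ hν.ne']

lemma lintegral_ofReal_expMeasure (hν : 0 < ν) :
    ∫⁻ x, ENNReal.ofReal x ∂expMeasure ν = ENNReal.ofReal ν⁻¹ := by
  rw [lintegral_eq_lintegral_meas_le _ ae_nonneg_expMeasure aemeasurable_id,
    setLIntegral_congr_fun measurableSet_Ioi (f := fun t => expMeasure ν {a | t ≤ a})
      (fun t ht => expMeasure_Ici hν ht.le),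
    ← ofReal_integral_eq_lintegral_ofReal (integrableOn_exp_neg_mul_Ioi hν 0)
      (.of_forall fun x => by positivity),
    integral_exp_neg_mul_Ioi hν]
  simp

lemma integrable_id_expMeasure (hν : 0 < ν) : Integrable (fun x => x) (expMeasure ν) := by
  refine ⟨aestronglyMeasurable_id, ?_⟩
  rw [hasFiniteIntegral_iff_ofReal ae_nonneg_expMeasure, lintegral_ofReal_expMeasure hν]
  exact ENNReal.ofReal_lt_top

lemma integral_id_expMeasure (hν : 0 < ν) : ∫ x, x ∂expMeasure ν = ν⁻¹ := by
  rw [integral_eq_lintegral_of_nonneg_ae ae_nonneg_expMeasure aestronglyMeasurable_id,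
    lintegral_ofReal_expMeasure hν, ENNReal.toReal_ofReal (by positivity)]

end ProbabilityTheory

lemma Finset.sum_range_succ_eq_sum_Icc {M : Type*} [AddCommMonoid M] (f : ℕ → M) (n : ℕ) :
    ∑ i ∈ range n, f (i + 1) = ∑ j ∈ Icc 1 n, f j := by
  rw [range_eq_Ico, sum_Ico_add' f 0 n 1]
  rfl

section StrongLaw

open Finset

variable {Ω : Type*} [MeasurableSpace Ω] {μ : Measure Ω}

theorem strong_law_ae_real_Icc (X : ℕ → Ω → ℝ) (hint : Integrable (X 0) μ)
    (hindep : iIndepFun X μ) (hident : ∀ i, IdentDistrib (X i) (X 0) μ μ) :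
    ∀ᵐ ω ∂μ, Tendsto (fun n : ℕ => (∑ j ∈ Icc 1 n, X j ω) / n) atTop (𝓝 μ[X 0]) := by
  have h := strong_law_ae_real (fun i => X (i + 1)) ((hident 1).integrable_iff.mpr hint)
    (fun i j hij => hindep.indepFun (by simpa using hij))
    (fun i => (hident (i + 1)).trans (hident 1).symm)
  filter_upwards [h] with ω hω
  simpa only [zero_add, (hident 1).integral_eq, sum_range_succ_eq_sum_Icc (X · ω)] using hω

theorem ae_tendsto_card_filter_div [IsFiniteMeasure μ] {α : Type*} [MeasurableSpace α]
    (X : ℕ → Ω → α) (hX : Measurable (X 0)) (hindep : iIndepFun X μ)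
    (hident : ∀ i, IdentDistrib (X i) (X 0) μ μ) {s : Set α} [DecidablePred (· ∈ s)]
    (hs : MeasurableSet s) :
    ∀ᵐ ω ∂μ, Tendsto (fun n : ℕ => (#{j ∈ Icc 1 n | X j ω ∈ s} : ℝ) / n) atTop
      (𝓝 (μ.real (X 0 ⁻¹' s))) := by
  have hf : Measurable (s.indicator (1 : α → ℝ)) := measurable_one.indicator hs
  have h := strong_law_ae_real_Icc (fun i => s.indicator 1 ∘ X i)
    ((integrable_const 1).indicator (hX hs)) (hindep.comp _ fun _ => hf)
    (fun i => (hident i).comp hf)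
  have hmean : μ[s.indicator 1 ∘ X 0] = μ.real (X 0 ⁻¹' s) := by
    rw [← integral_indicator_one (hX hs)]
    rfl
  filter_upwards [h] with ω hω
  rw [hmean] at hω
  simpa only [Function.comp_apply, Set.indicator_apply, Pi.one_apply, sum_boole] using hω

end StrongLaw

section PartialSums

open Finset

variable {L : ℕ → ℝ} {m : ℝ}

lemma finite_setOf_sum_Icc_le (hm : 0 < m)
    (hS : Tendsto (fun n : ℕ => (∑ j ∈ Icc 1 n, L j) / n) atTop (𝓝 m)) (x : ℝ) :
    {k | ∑ j ∈ Icc 1 k, L j ≤ x}.Finite := by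
  have hS' : Tendsto (fun n : ℕ => ∑ j ∈ Icc 1 n, L j) atTop atTop :=
    (hS.pos_mul_atTop hm tendsto_natCast_atTop_atTop).congr' <|
      (eventually_ne_atTop 0).mono fun n hn => div_mul_cancel₀ _ (Nat.cast_ne_zero.2 hn)
  exact (eventually_cofinite.1 (Nat.cofinite_eq_atTop ▸ hS'.eventually_gt_atTop x)).subset
    fun k (hk : _ ≤ x) => not_lt.2 hk

lemma card_filter_le_ncard_setOf_sum_Icc_le (hL : ∀ j, 0 ≤ L j) {P : ℕ → Prop}
    [DecidablePred P] {n : ℕ} {x : ℝ} (hn : ∑ j ∈ Icc 1 n, L j ≤ x)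
    (hfin : {k | ∑ j ∈ Icc 1 k, L j ≤ x}.Finite) :
    #{j ∈ Icc 1 n | P j} ≤ {k | 1 ≤ k ∧ ∑ j ∈ Icc 1 k, L j ≤ x ∧ P k}.ncard := by
  rw [← Set.ncard_coe_finset]
  refine Set.ncard_le_ncard (fun k hk => ?_) (hfin.subset fun k hk => hk.2.1)
  obtain ⟨hkn, hPk⟩ := mem_filter.1 (mem_coe.1 hk)
  refine ⟨(Finset.mem_Icc.1 hkn).1, le_trans ?_ hn, hPk⟩
  exact sum_le_sum_of_subset_of_nonneg (Icc_subset_Icc_right (Finset.mem_Icc.1 hkn).2)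
    fun i _ _ => hL i

theorem eventually_mul_le_ncard_of_tendsto (hL : ∀ j, 0 ≤ L j) (hm : 0 < m)
    {P : ℕ → Prop} [DecidablePred P] {p c : ℝ} (hc : c < p / m)
    (hS : Tendsto (fun n : ℕ => (∑ j ∈ Icc 1 n, L j) / n) atTop (𝓝 m))
    (hP : Tendsto (fun n : ℕ => (#{j ∈ Icc 1 n | P j} : ℝ) / n) atTop (𝓝 p)) :
    ∀ᶠ x in atTop, c * x ≤ {k | 1 ≤ k ∧ ∑ j ∈ Icc 1 k, L j ≤ x ∧ P k}.ncard := by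
  obtain ⟨m', hcm', hmm'⟩ : ∃ m', c < p / m' ∧ m < m' := by
    have : ∀ᶠ y in 𝓝 m, c < p / y :=
      (tendsto_const_nhds.div tendsto_id hm.ne').eventually (lt_mem_nhds hc)
    exact ((this.filter_mono nhdsWithin_le_nhds).and
      (self_mem_nhdsWithin : Ioi m ∈ 𝓝[>] m)).exists
  have hm' : 0 < m' := hm.trans hmm'
  -- all indices `k ≤ n x` have partial sums below `x`, and about `p x / m'` of them satisfy `P`
  set n : ℝ → ℕ := fun x => ⌊m'⁻¹ * x⌋₊
  have hn : Tendsto n atTop atTop :=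
    tendsto_nat_floor_atTop.comp (tendsto_id.const_mul_atTop (inv_pos.2 hm'))
  have hsum : ∀ᶠ x in atTop, ∑ j ∈ Icc 1 (n x), L j ≤ x := by
    have hk : ∀ᶠ k : ℕ in atTop, ∑ j ∈ Icc 1 k, L j ≤ m' * k := by
      filter_upwards [hS.eventually (gt_mem_nhds hmm'), eventually_gt_atTop 0] with k hk hk0
      exact ((div_lt_iff₀ (Nat.cast_pos.2 hk0)).1 hk).le
    filter_upwards [hn.eventually hk, eventually_ge_atTop 0] with x hx hx0
    calc _ ≤ m' * n x := hx
      _ ≤ m' * (m'⁻¹ * x) := by gcongr; exact Nat.floor_le (by positivity)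
      _ = x := by field_simp
  have hcard : ∀ᶠ x in atTop, c * x < #{j ∈ Icc 1 (n x) | P j} := by
    have : Tendsto (fun x => (#{j ∈ Icc 1 (n x) | P j} : ℝ) / x) atTop (𝓝 (p / m')) := by
      refine ((hP.comp hn).mul (tendsto_nat_floor_mul_div_atTop (inv_pos.2 hm').le)).congr' ?_
      filter_upwards [hn.eventually (eventually_ne_atTop 0)] with x hx
      exact div_mul_div_cancel₀ (Nat.cast_ne_zero.2 hx)
    filter_upwards [this.eventually (lt_mem_nhds hcm'), eventually_gt_atTop 0] with x hx hx0
    exact (lt_div_iff₀ hx0).1 hx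
  filter_upwards [hsum, hcard] with x hx hx'
  have hle := card_filter_le_ncard_setOf_sum_Icc_le hL (P := P) hx
    (finite_setOf_sum_Icc_le hm hS x)
  exact hx'.le.trans (by exact_mod_cast hle)

end PartialSums

/-- For i.i.d. exponential random variables `ℓ_j` of rate `ν > 0` with partial
sums `S_k = ℓ_1 + ⋯ + ℓ_k`, and any `ρ > 0`, almost surely, eventually in `N`, the number of
indices `k ≥ 1` with `S_k ≤ N/(2ρ)` and `ℓ_k ≥ 3` is at least `νN/(8 e^{3ν} ρ)`. -/
theorem count_long_spacings_in_box
    {Ω : Type*} [MeasurableSpace Ω] (μ : Measure Ω) [IsProbabilityMeasure μ]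
    (ν ρ : ℝ) (hν : 0 < ν) (hρ : 0 < ρ)
    (ℓ : ℕ → Ω → ℝ) (hmeas : ∀ j, Measurable (ℓ j))
    (hindep : iIndepFun ℓ μ)
    (hdist : ∀ j, μ.map (ℓ j) = expMeasure ν) :
    ∀ᵐ ω ∂μ, ∃ N₀ : ℕ, ∀ N, N₀ ≤ N →
      ν * N / (8 * Real.exp (3 * ν) * ρ)
        ≤ {k : ℕ | 1 ≤ k ∧ (∑ j ∈ Finset.Icc 1 k, ℓ j ω) ≤ (N : ℝ) / (2 * ρ)
            ∧ 3 ≤ ℓ k ω}.ncard := by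
  have hident : ∀ i, IdentDistrib (ℓ i) (ℓ 0) μ μ :=
    fun i => ⟨(hmeas i).aemeasurable, (hmeas 0).aemeasurable, by rw [hdist, hdist]⟩
  have hint : Integrable (ℓ 0) μ :=
    (integrable_map_measure aestronglyMeasurable_id (hmeas 0).aemeasurable).1
      (hdist 0 ▸ integrable_id_expMeasure hν)
  have hmean : μ[ℓ 0] = ν⁻¹ := by
    rw [← integral_id_expMeasure hν, ← hdist 0]
    exact (integral_map (hmeas 0).aemeasurable aestronglyMeasurable_id).symm
  have hlong : μ.real (ℓ 0 ⁻¹' Ici 3) = exp (-(ν * 3)) := by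
    rw [measureReal_def, ← Measure.map_apply (hmeas 0) measurableSet_Ici, hdist,
      expMeasure_Ici hν zero_le_three, ENNReal.toReal_ofReal (exp_pos _).le]
  have hnonneg : ∀ᵐ ω ∂μ, ∀ j, 0 ≤ ℓ j ω := ae_all_iff.2 fun j =>
    ae_of_ae_map (hmeas j).aemeasurable (hdist j ▸ ae_nonneg_expMeasure)
  filter_upwards [hnonneg, strong_law_ae_real_Icc ℓ hint hindep hident,
    ae_tendsto_card_filter_div ℓ (hmeas 0) hindep hident measurableSet_Ici] with ω h0 hS hP
  rw [hmean] at hS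
  rw [hlong] at hP
  have hc : ν * exp (-(ν * 3)) / 4 < exp (-(ν * 3)) / ν⁻¹ := by
    rw [div_inv_eq_mul]; nlinarith [exp_pos (-(ν * 3))]
  obtain ⟨N₀, hN₀⟩ := eventually_atTop.1 <|
    (tendsto_natCast_atTop_atTop.atTop_div_const (by positivity : (0 : ℝ) < 2 * ρ)).eventually
      (eventually_mul_le_ncard_of_tendsto h0 (inv_pos.2 hν) hc hS hP)
  refine ⟨N₀, fun N hN => le_of_eq_of_le ?_ (hN₀ N hN)⟩
  rw [exp_neg]
  field_simp
  ring
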